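/- Let E be an infinite distributive f-algebra with multiplicative unit e and let (x_n) be a decreasing sequence in E. Then x_n mo-converges to 0 if and only if |x_n|(u ∧ e) order converges to 0 for all u ∈ E₊. -/

import Mathlib

universe u v w

/-- A (not necessarily unital) `f`-algebra: a vector lattice over `ℝ` with an associative
multiplication such that products of positive elements are positive and `x ⊓ y = 0` implies
`(x*z) ⊓ y = (z*x) ⊓ y = 0` for every positive `z`. -/
class FAlgebra (E : Type u) extends Lattice E, NonUnitalRing E, Module ℝ E where
  add_le_add_left' : ∀ a b : E, a ≤ b → ∀ c : E, c + a ≤ c + b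
  smul_nonneg' : ∀ (r : ℝ) (x : E), 0 ≤ r → 0 ≤ x → 0 ≤ r • x
  mul_nonneg' : ∀ x y : E, 0 ≤ x → 0 ≤ y → 0 ≤ x * y
  f_inf : ∀ x y z : E, x ⊓ y = 0 → 0 ≤ z → (x * z) ⊓ y = 0 ∧ (z * x) ⊓ y = 0

variable {E : Type u}

/-- Order convergence of a net `x` to `l`: there is a net `y` on some directed index set,
decreasing with infimum `0`, eventually dominating `|x a - l|`. -/
def OrderConvTo [Lattice E] [AddCommGroup E] {ι : Type v} [Preorder ι]
    (x : ι → E) (l : E) : Prop :=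
  ∃ (κ : Type u) (P : Preorder κ) (y : κ → E),
    Nonempty κ ∧
    (∀ a b : κ, ∃ c : κ, P.le a c ∧ P.le b c) ∧
    (∀ a b : κ, P.le a b → y b ≤ y a) ∧
    IsGLB (Set.range y) 0 ∧
    (∀ b : κ, ∃ a₀ : ι, ∀ a : ι, a₀ ≤ a → |x a - l| ≤ y b)

/-- Multiplicative order (mo-) convergence in an `f`-algebra:
`|x_α - l| * u` order converges to `0` for every positive `u`. -/
def MOConvTo [FAlgebra E] {ι : Type v} [Preorder ι] (x : ι → E) (l : E) : Prop :=
  ∀ u : E, 0 ≤ u → OrderConvTo (fun a => |x a - l| * u) 0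

/-- An `f`-algebra is infinite distributive if multiplication by a positive element
preserves existing infima of sets of positive elements. -/
def InfDistrib (E : Type u) [FAlgebra E] : Prop :=
  ∀ A : Set E, (∀ a ∈ A, (0 : E) ≤ a) → ∀ m : E, IsGLB A m →
    ∀ u : E, 0 ≤ u → IsGLB ((fun a => u * a) '' A) (u * m)

/-- Archimedean property: `(1/n)x ↓ 0` for every positive `x`. -/
def ArchimedeanVL (E : Type u) [FAlgebra E] : Prop :=
  ∀ x : E, 0 ≤ x → IsGLB (Set.range fun n : ℕ => ((n : ℝ) + 1)⁻¹ • x) 0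

/-- A multiplicative unit. -/
def IsMulUnit [FAlgebra E] (e : E) : Prop := ∀ x : E, e * x = x ∧ x * e = x

/-- Order convergence relative to a sublattice-subspace `S` of `E`: the dominating
decreasing net lies in `S` and its infimum computed within `S` is `0`. -/
def OrderConvToIn [FAlgebra E] (S : Set E) {ι : Type v} [Preorder ι]
    (x : ι → E) (l : E) : Prop :=
  ∃ (κ : Type u) (P : Preorder κ) (y : κ → E),
    Nonempty κ ∧
    (∀ a b : κ, ∃ c : κ, P.le a c ∧ P.le b c) ∧
    (∀ b : κ, y b ∈ S) ∧
    (∀ a b : κ, P.le a b → y b ≤ y a) ∧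
    (∀ b : κ, 0 ≤ y b) ∧
    (∀ z ∈ S, (∀ b : κ, z ≤ y b) → z ≤ 0) ∧
    (∀ b : κ, ∃ a₀ : ι, ∀ a : ι, a₀ ≤ a → |x a - l| ≤ y b)

/-- mo-convergence computed within a sub-`f`-algebra `S` of `E`. -/
def MOConvToIn [FAlgebra E] (S : Set E) {ι : Type v} [Preorder ι]
    (x : ι → E) (l : E) : Prop :=
  ∀ u ∈ S, 0 ≤ u → OrderConvToIn S (fun a => |x a - l| * u) 0

/-- A sub-`f`-algebra (as a set): a vector-sublattice closed under multiplication. -/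
def IsSubFAlgebra [FAlgebra E] (Y : Set E) : Prop :=
  (0 : E) ∈ Y ∧ (∀ x ∈ Y, ∀ y ∈ Y, x + y ∈ Y) ∧ (∀ r : ℝ, ∀ x ∈ Y, r • x ∈ Y) ∧
  (∀ x ∈ Y, -x ∈ Y) ∧ (∀ x ∈ Y, ∀ y ∈ Y, x * y ∈ Y) ∧ (∀ x ∈ Y, ∀ y ∈ Y, x ⊔ y ∈ Y)

/-- An order ideal (solid subspace). -/
def IsOrderIdeal [FAlgebra E] (I : Set E) : Prop :=
  (0 : E) ∈ I ∧ (∀ x ∈ I, ∀ y ∈ I, x + y ∈ I) ∧ (∀ r : ℝ, ∀ x ∈ I, r • x ∈ I) ∧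
  (∀ x y : E, |x| ≤ |y| → y ∈ I → x ∈ I)

/-- mo-KB-space: every order bounded increasing net of positive elements is mo-convergent. -/
def MOKB (E : Type u) [FAlgebra E] : Prop :=
  ∀ (ι : Type u) (P : Preorder ι), Nonempty ι →
    (∀ a b : ι, ∃ c : ι, P.le a c ∧ P.le b c) →
    ∀ x : ι → E, (∀ a b : ι, P.le a b → x a ≤ x b) → (∀ a, 0 ≤ x a) →
      (∃ z : E, ∀ a, x a ≤ z) → ∃ l : E, @MOConvTo E _ ι P x l

/-- mo-continuity: every net order converging to `0` mo-converges to `0`. -/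
def MOContinuous (E : Type u) [FAlgebra E] : Prop :=
  ∀ (ι : Type u) (P : Preorder ι), Nonempty ι →
    (∀ a b : ι, ∃ c : ι, P.le a c ∧ P.le b c) →
    ∀ x : ι → E, @OrderConvTo E _ _ ι P x 0 → @MOConvTo E _ ι P x 0

/-- Order (Dedekind) completeness. -/
def OrderCompleteVL (E : Type u) [FAlgebra E] : Prop :=
  ∀ A : Set E, A.Nonempty → BddAbove A → ∃ m : E, IsLUB A m

/-!
Taking `u = e` shows that `xₙ` order converges to `0`; being decreasing, it is then positive.
For `u ≥ 0` and `n ≥ 1` the element `p = (u - n e)⁺` is disjoint from `(u - n e)⁻`, so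
`u p = p² + n p`; as `p ≤ u` this gives `n (u - u ⊓ n e) = n p ≤ u²`, hence
`u ≤ u²/n + n (u ⊓ e)`. Multiplying by `xₖ ≤ x₀` yields `xₖ u ≤ x₀ u²/n + n xₖ (u ⊓ e)`: the first
term is made small by the Archimedean property, the second by the hypothesis.
-/

section OrderedModule

variable [Lattice E] [AddCommGroup E] [IsOrderedAddMonoid E] [Module ℝ E]
  [PosSMulMono ℝ E]

theorem inf_smul_le_smul_inf {c : ℝ} (hc : 1 ≤ c) {u : E} (hu : 0 ≤ u) (v : E) :
    u ⊓ c • v ≤ c • (u ⊓ v) := by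
  have hc₀ : 0 < c := zero_lt_one.trans_le hc
  rw [← inv_smul_le_iff_of_pos hc₀]
  refine le_inf ?_ ?_
  · calc c⁻¹ • (u ⊓ c • v) ≤ c⁻¹ • u := smul_le_smul_of_nonneg_left inf_le_left (by positivity)
      _ ≤ u := smul_le_of_le_one_left hu (inv_le_one_of_one_le₀ hc)
  · exact (inv_smul_le_iff_of_pos hc₀).2 inf_le_right

theorem le_of_isGLB_range_of_forall_le_add_smul {κ : Type*} {y : κ → E}
    (hy : IsGLB (Set.range y) 0) {c : ℝ} (hc : 0 < c) {z A : E} (h : ∀ b, z ≤ A + c • y b) :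
    z ≤ A := by
  have : c⁻¹ • (z - A) ≤ 0 := hy.2 <| by
    rintro _ ⟨b, rfl⟩
    rw [inv_smul_le_iff_of_pos hc, sub_le_iff_le_add']
    exact h b
  rwa [inv_smul_le_iff_of_pos hc, smul_zero, sub_nonpos] at this

end OrderedModule

namespace FAlgebra

variable [FAlgebra E]

instance : IsOrderedAddMonoid E where
  add_le_add_left a b h c := by
    simpa only [add_comm] using FAlgebra.add_le_add_left' a b h c

instance : PosSMulMono ℝ E :=
  PosSMulMono.of_smul_nonneg fun r hr x hx => FAlgebra.smul_nonneg' r x hr hx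

instance : PosMulMono E where
  mul_le_mul_of_nonneg_left a ha b c h := by
    simpa only [mul_sub, sub_nonneg] using FAlgebra.mul_nonneg' a (c - b) ha (sub_nonneg.2 h)

instance : MulPosMono E where
  mul_le_mul_of_nonneg_right c hc a b h := by
    simpa only [sub_mul, sub_nonneg] using FAlgebra.mul_nonneg' (b - a) c (sub_nonneg.2 h) hc

theorem mul_eq_zero_of_inf_eq_zero {a b : E} (ha : 0 ≤ a) (hb : 0 ≤ b) (h : a ⊓ b = 0) :
    a * b = 0 := by
  have hab : (a * b) ⊓ b = 0 := (FAlgebra.f_inf a b b h hb).1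
  simpa only [inf_idem] using (FAlgebra.f_inf b (a * b) a (by rw [inf_comm]; exact hab) ha).2

theorem negPart_mul_posPart (a : E) : a⁻ * a⁺ = 0 :=
  mul_eq_zero_of_inf_eq_zero (negPart_nonneg a) (posPart_nonneg a)
    (by rw [inf_comm, posPart_inf_negPart_eq_zero])

theorem mul_natCast_smul (a b : E) (n : ℕ) : a * ((n : ℝ) • b) = (n : ℝ) • (a * b) := by
  simp only [Nat.cast_smul_eq_nsmul, mul_smul_comm]

theorem natCast_smul_mul (a b : E) (n : ℕ) : ((n : ℝ) • a) * b = (n : ℝ) • (a * b) := by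
  simp only [Nat.cast_smul_eq_nsmul, smul_mul_assoc]

theorem mul_inv_natCast_smul (a b : E) (n : ℕ) : a * ((n : ℝ)⁻¹ • b) = (n : ℝ)⁻¹ • (a * b) := by
  rcases eq_or_ne (n : ℝ) 0 with hn | hn
  · simp [hn]
  · rw [eq_inv_smul_iff₀ hn, ← mul_natCast_smul, smul_inv_smul₀ hn]

theorem mul_self_nonneg (a : E) : 0 ≤ a * a := by
  have hpn : a⁺ * a⁻ = 0 := mul_eq_zero_of_inf_eq_zero (posPart_nonneg a) (negPart_nonneg a)
    (posPart_inf_negPart_eq_zero a)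
  have hsq : a * a = a⁺ * a⁺ + a⁻ * a⁻ := by
    conv_lhs => rw [← posPart_sub_negPart a]
    rw [mul_sub, sub_mul, sub_mul, hpn, negPart_mul_posPart]
    abel
  rw [hsq]
  exact add_nonneg (mul_nonneg (posPart_nonneg a) (posPart_nonneg a))
    (mul_nonneg (negPart_nonneg a) (negPart_nonneg a))

end FAlgebra

namespace IsMulUnit

open FAlgebra

variable [FAlgebra E] {e : E}

theorem nonneg (he : IsMulUnit e) : 0 ≤ e := (he e).1 ▸ mul_self_nonneg e

theorem natCast_smul_sub_inf_le (he : IsMulUnit e) {u : E} (hu : 0 ≤ u) (n : ℕ) :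
    (n : ℝ) • (u - u ⊓ (n : ℝ) • e) ≤ u * u := by
  set v := u - (n : ℝ) • e
  have hsub : u - u ⊓ (n : ℝ) • e = v⁺ := by
    rw [sub_inf, sub_self, posPart_def, sup_comm]
  have hvu : v⁺ ≤ u := by
    rw [posPart_def]
    exact sup_le (sub_le_self u (smul_nonneg (Nat.cast_nonneg n) he.nonneg)) hu
  have hup : u * v⁺ = v⁺ * v⁺ + (n : ℝ) • v⁺ := by
    calc u * v⁺ = (v⁺ - v⁻ + (n : ℝ) • e) * v⁺ := by rw [posPart_sub_negPart, sub_add_cancel]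
      _ = v⁺ * v⁺ + (n : ℝ) • v⁺ := by
        rw [add_mul, sub_mul, negPart_mul_posPart, sub_zero, natCast_smul_mul, (he _).1]
  rw [hsub]
  calc (n : ℝ) • v⁺ ≤ u * v⁺ := by rw [hup]; exact le_add_of_nonneg_left (mul_self_nonneg _)
    _ ≤ u * u := mul_le_mul_of_nonneg_left hvu hu

theorem le_inv_smul_mul_self_add_smul_inf (he : IsMulUnit e) {u : E} (hu : 0 ≤ u) {n : ℕ}
    (hn : 0 < n) : u ≤ (n : ℝ)⁻¹ • (u * u) + (n : ℝ) • (u ⊓ e) := by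
  have hn' : (0 : ℝ) < n := Nat.cast_pos.2 hn
  calc u = (u - u ⊓ (n : ℝ) • e) + u ⊓ (n : ℝ) • e := (sub_add_cancel _ _).symm
    _ ≤ (n : ℝ)⁻¹ • (u * u) + (n : ℝ) • (u ⊓ e) :=
      add_le_add ((le_inv_smul_iff_of_pos hn').2 (he.natCast_smul_sub_inf_le hu n))
        (inf_smul_le_smul_inf (Nat.one_le_cast.2 hn) hu e)

end IsMulUnit

section OrderConvergence

variable {ι : Type v} [Preorder ι]

theorem Antitone.nonneg_of_orderConvTo_zero [Lattice E] [AddCommGroup E] [IsOrderedAddMonoid E]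
    [IsDirected ι (· ≤ ·)] {x : ι → E} (hx : Antitone x) (h : OrderConvTo x 0) (a : ι) :
    0 ≤ x a := by
  obtain ⟨κ, P, y, -, -, -, hglb, hdom⟩ := h
  have : -x a ≤ 0 := hglb.2 <| by
    rintro _ ⟨b, rfl⟩
    obtain ⟨a₀, ha₀⟩ := hdom b
    obtain ⟨c, hac, ha₀c⟩ := directed_of (· ≤ ·) a a₀
    calc -x a ≤ -x c := neg_le_neg (hx hac)
      _ ≤ |x c - 0| := by rw [sub_zero]; exact neg_le_abs _
      _ ≤ y b := ha₀ c ha₀c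
  exact neg_nonpos.1 this

theorem OrderConvTo.of_abs_le_inv_smul_add_smul [FAlgebra E] (har : ArchimedeanVL E)
    {x z : ι → E} {X : E} (hX : 0 ≤ X) (hz : OrderConvTo z 0)
    (h : ∀ (n : ℕ) (a : ι), |x a| ≤ ((n : ℝ) + 1)⁻¹ • X + ((n : ℝ) + 1) • |z a|) :
    OrderConvTo x 0 := by
  obtain ⟨κ, P, y, hne, hdir, hanti, hglb, hdom⟩ := hz
  let _ : Preorder κ := P
  have hy : ∀ b, 0 ≤ y b := fun b => hglb.1 ⟨b, rfl⟩
  set g : ℕ → κ → E := fun n b => ((n : ℝ) + 1)⁻¹ • X + ((n : ℝ) + 1) • y b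
  have hg_anti : ∀ n, Antitone (g n) := fun n b b' hb =>
    add_le_add_right (smul_le_smul_of_nonneg_left (hanti b b' hb) (by positivity)) _
  -- Finite infima over `n ≤ k` make the dominating net decreasing in both indices.
  let w : ℕ × κ → E := fun p => (Finset.range (p.1 + 1)).inf' Finset.nonempty_range_add_one
    fun n => g n p.2
  refine ⟨ℕ × κ, inferInstance, w, inferInstance, ?_, ?_, ⟨?_, ?_⟩, ?_⟩
  · rintro ⟨k, b⟩ ⟨k', b'⟩
    obtain ⟨c, hbc, hb'c⟩ := hdir b b'
    exact ⟨(max k k', c), ⟨le_max_left k k', hbc⟩, ⟨le_max_right k k', hb'c⟩⟩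
  · rintro ⟨k, b⟩ ⟨k', b'⟩ ⟨hk, hb⟩
    refine Finset.le_inf' _ _ fun n hn => (Finset.inf'_le _ ?_).trans (hg_anti n hb)
    simp only [Finset.mem_range] at hn ⊢
    exact hn.trans_le (Nat.succ_le_succ hk)
  · rintro _ ⟨p, rfl⟩
    exact Finset.le_inf' _ _ fun n _ => add_nonneg (smul_nonneg (by positivity) hX)
      (smul_nonneg (by positivity) (hy p.2))
  · intro c hc
    refine (har X hX).2 ?_
    rintro _ ⟨k, rfl⟩
    refine le_of_isGLB_range_of_forall_le_add_smul hglb (by positivity : (0 : ℝ) < k + 1)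
      fun b => (hc ⟨(k, b), rfl⟩).trans (Finset.inf'_le _ (Finset.self_mem_range_succ k))
  · rintro ⟨k, b⟩
    obtain ⟨a₀, ha₀⟩ := hdom b
    refine ⟨a₀, fun a ha => Finset.le_inf' _ _ fun n _ => ?_⟩
    rw [sub_zero]
    refine (h n a).trans (add_le_add_right (smul_le_smul_of_nonneg_left ?_ (by positivity)) _)
    simpa only [sub_zero] using ha₀ a ha

end OrderConvergence

theorem stmt16_general {E : Type u} [FAlgebra E] (har : ArchimedeanVL E)
    (e : E) (he : IsMulUnit e) (x : ℕ → E)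
    (hdec : ∀ n m : ℕ, n ≤ m → x m ≤ x n) :
    MOConvTo x (0 : E) ↔
      ∀ u : E, 0 ≤ u → OrderConvTo (fun n => |x n| * (u ⊓ e)) (0 : E) := by
  simp only [MOConvTo, sub_zero]
  refine ⟨fun h u hu => h _ (le_inf hu he.nonneg), fun h u hu => ?_⟩
  have hx : ∀ n, 0 ≤ x n := Antitone.nonneg_of_orderConvTo_zero hdec <| by
    simpa only [OrderConvTo, sub_zero, abs_abs, inf_idem, (he _).2] using h e he.nonneg
  refine OrderConvTo.of_abs_le_inv_smul_add_smul har (X := x 0 * (u * u))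
    (mul_nonneg (hx 0) (FAlgebra.mul_self_nonneg u)) (h u hu) fun n k => ?_
  have hxk : x k ≤ x 0 := hdec 0 k k.zero_le
  rw [abs_of_nonneg (hx k), abs_of_nonneg (mul_nonneg (hx k) hu),
    abs_of_nonneg (mul_nonneg (hx k) (le_inf hu he.nonneg))]
  calc x k * u ≤ x k * (((n + 1 : ℕ) : ℝ)⁻¹ • (u * u) + ((n + 1 : ℕ) : ℝ) • (u ⊓ e)) :=
        mul_le_mul_of_nonneg_left (he.le_inv_smul_mul_self_add_smul_inf hu n.succ_pos) (hx k)
    _ = ((n : ℝ) + 1)⁻¹ • (x k * (u * u)) + ((n : ℝ) + 1) • (x k * (u ⊓ e)) := by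
        rw [mul_add, FAlgebra.mul_inv_natCast_smul, FAlgebra.mul_natCast_smul, Nat.cast_succ]
    _ ≤ ((n : ℝ) + 1)⁻¹ • (x 0 * (u * u)) + ((n : ℝ) + 1) • (x k * (u ⊓ e)) := by
        gcongr

/-- in an Archimedean infinite distributive `f`-algebra with unit `e`,
a decreasing sequence mo-converges to `0` iff `|x_n|(u ⊓ e)` order converges to `0`
for every positive `u`. -/
theorem stmt16 {E : Type u} [FAlgebra E] (har : ArchimedeanVL E) (hd : InfDistrib E)
    (e : E) (he : IsMulUnit e) (x : ℕ → E)
    (hdec : ∀ n m : ℕ, n ≤ m → x m ≤ x n) :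
    MOConvTo x (0 : E) ↔
      ∀ u : E, 0 ≤ u → OrderConvTo (fun n => |x n| * (u ⊓ e)) (0 : E) :=
  stmt16_general har e he x hdec
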